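/- arXiv:math/0306026 — 5 statements merged into one kernel-verified Lean document; each statement's English description precedes it below -/
import Mathlib

section
/- Let L be an orthomodular lattice and p : L × L → [0,1] an s-map (i.e. p(1,1)=1; p(a,b)=0 whenever a ⟂ b; and p is additive in each argument over orthogonal joins). If a and b are compatible elements of L, then p(a,b) = p(a∧b, a∧b) = p(b,a). -/
/-- An orthomodular lattice: a bounded lattice with an orthocomplementation
satisfying `aᶜᶜ = a`, `a ⊔ aᶜ = ⊤`, antitonicity, and the orthomodular law. -/
class OML (L : Type*) extends Lattice L, BoundedOrder L, Compl L where
  compl_compl : ∀ a : L, aᶜᶜ = a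
  sup_compl : ∀ a : L, a ⊔ aᶜ = ⊤
  compl_antitone : ∀ a b : L, a ≤ b → bᶜ ≤ aᶜ
  orthomodular : ∀ a b : L, a ≤ b → b = a ⊔ (aᶜ ⊓ b)

/-- Orthogonality: `a ⟂ b` iff `a ≤ bᶜ`. -/
def Orth {L : Type*} [OML L] (a b : L) : Prop := a ≤ bᶜ

/-- An s-map on an OML `L`: `p : L × L → [0,1]` with `p(1,1)=1`,
`p(a,b)=0` for orthogonal `a,b`, and additivity in each coordinate
over orthogonal joins. -/
structure SMap (L : Type*) [OML L] where
  p : L → L → ℝ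
  nonneg : ∀ a b, 0 ≤ p a b
  le_one : ∀ a b, p a b ≤ 1
  top_top : p ⊤ ⊤ = 1
  orth_zero : ∀ a b, Orth a b → p a b = 0
  add_left : ∀ a b c, Orth a b → p (a ⊔ b) c = p a c + p b c
  add_right : ∀ a b c, Orth a b → p c (a ⊔ b) = p c a + p c b

/-- Compatibility of two elements in an OML. -/
def Compat {L : Type*} [OML L] (a b : L) : Prop :=
  ∃ a₁ b₁ c : L, Orth a₁ b₁ ∧ Orth a₁ c ∧ Orth b₁ c ∧ a = a₁ ⊔ c ∧ b = b₁ ⊔ c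

/-!
Write `a = a₁ ⊔ c`, `b = b₁ ⊔ c` with `a₁, b₁, c` mutually orthogonal. Expanding `p` over these
orthogonal joins in both arguments, every cross term has orthogonal arguments and vanishes, so
`p(a, b) = p(c, c) = p(b, a)`; and the orthomodular law gives `a ⊓ b = c`.
-/

theorem Orth.symm {L : Type*} [OML L] {a b : L} (h : Orth a b) : Orth b a := by
  simpa only [Orth, OML.compl_compl] using OML.compl_antitone a bᶜ h

namespace OML

variable {L : Type*} [OML L]

theorem compl_sup (a b : L) : (a ⊔ b)ᶜ = aᶜ ⊓ bᶜ := by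
  apply le_antisymm
  · exact le_inf (compl_antitone _ _ le_sup_left) (compl_antitone _ _ le_sup_right)
  · have le_compl_of_compl_le {x y : L} (h : y ≤ xᶜ) : x ≤ yᶜ := by
      simpa only [compl_compl] using compl_antitone y xᶜ h
    exact le_compl_of_compl_le
      (sup_le (le_compl_of_compl_le inf_le_left) (le_compl_of_compl_le inf_le_right))

theorem compl_top : (⊤ : L)ᶜ = ⊥ := by
  simpa only [compl_compl, le_bot_iff] using compl_antitone (⊥ : L)ᶜ ⊤ le_top

theorem inf_compl_self (a : L) : a ⊓ aᶜ = ⊥ := by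
  simpa only [compl_sup, compl_compl, compl_top, inf_comm] using congrArg (·ᶜ) (sup_compl a)

theorem compl_inf_sup_of_orth {c d : L} (h : Orth c d) : dᶜ ⊓ (d ⊔ c) = c := by
  have hc : c ≤ dᶜ ⊓ (d ⊔ c) := le_inf h le_sup_right
  have hrest : cᶜ ⊓ (dᶜ ⊓ (d ⊔ c)) = ⊥ := by
    rw [← inf_assoc, inf_comm cᶜ, ← compl_sup, inf_comm, inf_compl_self]
  rw [orthomodular c _ hc, hrest, sup_bot_eq]

theorem sup_inf_sup_of_orth {a₁ b₁ c : L} (h₁ : Orth a₁ b₁) (h₃ : Orth b₁ c) :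
    (a₁ ⊔ c) ⊓ (b₁ ⊔ c) = c := by
  apply le_antisymm
  · calc (a₁ ⊔ c) ⊓ (b₁ ⊔ c) ≤ b₁ᶜ ⊓ (b₁ ⊔ c) := inf_le_inf_right _ (sup_le h₁ h₃.symm)
      _ = c := compl_inf_sup_of_orth h₃.symm
  · exact le_inf le_sup_right le_sup_right

end OML

theorem SMap.p_sup_sup_of_orth {L : Type*} [OML L] (P : SMap L) {a₁ b₁ c : L}
    (h₁ : Orth a₁ b₁) (h₂ : Orth a₁ c) (h₃ : Orth b₁ c) :
    P.p (a₁ ⊔ c) (b₁ ⊔ c) = P.p c c := by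
  rw [P.add_left _ _ _ h₂, P.add_right _ _ _ h₃, P.add_right _ _ _ h₃,
    P.orth_zero _ _ h₁, P.orth_zero _ _ h₂, P.orth_zero _ _ h₃.symm]
  ring

theorem smap_compatible {L : Type*} [OML L] (P : SMap L) (a b : L)
    (hab : Compat a b) :
    P.p a b = P.p (a ⊓ b) (a ⊓ b) ∧ P.p a b = P.p b a := by
  obtain ⟨a₁, b₁, c, h₁, h₂, h₃, rfl, rfl⟩ := hab
  rw [OML.sup_inf_sup_of_orth h₁ h₃]
  have hpab : P.p (a₁ ⊔ c) (b₁ ⊔ c) = P.p c c := P.p_sup_sup_of_orth h₁ h₂ h₃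
  have hpba : P.p (b₁ ⊔ c) (a₁ ⊔ c) = P.p c c := P.p_sup_sup_of_orth h₁.symm h₃ h₂
  exact ⟨hpab, hpab.trans hpba.symm⟩
end

section
/- Let L be an orthomodular lattice and p an s-map on L. Then the diagonal map ν(b) := p(b,b) is a state on L, i.e. ν(0)=0, ν(1)=1, and ν(a∨b)=ν(a)+ν(b) whenever a ⟂ b. -/
namespace SMap

variable {L : Type*} [OML L] (P : SMap L)

theorem bot_bot : P.p ⊥ ⊥ = 0 :=
  P.orth_zero ⊥ ⊥ bot_le

theorem diag_sup {a b : L} (h : Orth a b) :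
    P.p (a ⊔ b) (a ⊔ b) = P.p a a + P.p b b := by
  calc P.p (a ⊔ b) (a ⊔ b)
      = (P.p a a + P.p a b) + (P.p b a + P.p b b) := by
        rw [P.add_left a b _ h, P.add_right a b a h, P.add_right a b b h]
    _ = P.p a a + P.p b b := by
        rw [P.orth_zero a b h, P.orth_zero b a h.symm, add_zero, zero_add]

end SMap

theorem smap_diag_is_state {L : Type*} [OML L] (P : SMap L) :
    P.p ⊥ ⊥ = 0 ∧ P.p ⊤ ⊤ = 1 ∧
      ∀ a b : L, Orth a b → P.p (a ⊔ b) (a ⊔ b) = P.p a a + P.p b b :=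
  ⟨P.bot_bot, P.top_top, fun _ _ h => P.diag_sup h⟩
end

section
/- Let L be an orthomodular lattice and p an s-map on L. Define L_c = {b ∈ L : p(b,b) ≠ 0} and f_p(a,b) = p(a,b)/p(b,b) for b ∈ L_c. Then for each fixed b ∈ L_c, the map f_p(·,b) is a state on L: f_p(0,b)=0, f_p(1,b)=1, f_p(b,b)=1, and f_p(a∨c,b)=f_p(a,b)+f_p(c,b) whenever a ⟂ c. -/
theorem orth_self_compl {L : Type*} [OML L] (a : L) : Orth a aᶜ :=
  (OML.compl_compl a).symm.le

namespace SMap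

variable {L : Type*} [OML L] (P : SMap L)

theorem p_bot_left (b : L) : P.p ⊥ b = 0 :=
  P.orth_zero _ _ bot_le

theorem p_compl_self_left (b : L) : P.p bᶜ b = 0 :=
  P.orth_zero _ _ le_rfl

theorem p_top_left (b : L) : P.p ⊤ b = P.p b b := by
  rw [← OML.sup_compl b, P.add_left _ _ _ (orth_self_compl b), P.p_compl_self_left, add_zero]

end SMap

theorem smap_conditional_is_state {L : Type*} [OML L] (P : SMap L) (b : L)
    (hb : P.p b b ≠ 0) :
    P.p ⊥ b / P.p b b = 0 ∧ P.p ⊤ b / P.p b b = 1 ∧ P.p b b / P.p b b = 1 ∧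
      ∀ a c : L, Orth a c →
        P.p (a ⊔ c) b / P.p b b = P.p a b / P.p b b + P.p c b / P.p b b := by
  refine ⟨by rw [P.p_bot_left, zero_div], by rw [P.p_top_left, div_self hb], div_self hb, ?_⟩
  intro a c hac
  rw [P.add_left _ _ _ hac, add_div]
end

section
/- Let L be an orthomodular lattice, p an s-map on L, and f_p(a,b)=p(a,b)/p(b,b) for b with p(b,b)≠0. If b₁,…,bₙ ∈ L are mutually orthogonal with p(bᵢ,bᵢ)≠0 for each i and p(⋁ᵢbᵢ,⋁ᵢbᵢ)≠0, then for every a ∈ L: f_p(a, ⋁ᵢbᵢ) = Σᵢ f_p(bᵢ, ⋁ᵢbᵢ) · f_p(a, bᵢ). -/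
theorem OML.compl_bot {L : Type*} [OML L] : (⊥ : L)ᶜ = ⊤ := by
  simpa only [bot_sup_eq] using OML.sup_compl (⊥ : L)

namespace SMap

variable {L : Type*} [OML L] (P : SMap L)

theorem p_bot_right (a : L) : P.p a ⊥ = 0 :=
  P.orth_zero a ⊥ (by simp only [Orth, OML.compl_bot, le_top])

theorem p_of_le {b c : L} (h : b ≤ c) : P.p b c = P.p b b := by
  have horth : Orth b (bᶜ ⊓ c) := Orth.symm inf_le_left
  calc P.p b c = P.p b (b ⊔ (bᶜ ⊓ c)) := by rw [← OML.orthomodular b c h]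
    _ = P.p b b + P.p b (bᶜ ⊓ c) := P.add_right _ _ _ horth
    _ = P.p b b := by rw [P.orth_zero _ _ horth, add_zero]

theorem p_finset_sup_right {ι : Type*} [DecidableEq ι] (a : L) (s : Finset ι) (b : ι → L)
    (hb : (s : Set ι).Pairwise fun i j => Orth (b i) (b j)) :
    P.p a (s.sup b) = ∑ i ∈ s, P.p a (b i) := by
  induction s using Finset.induction with
  | empty => simp only [Finset.sup_empty, p_bot_right, Finset.sum_empty]
  | @insert i s hi ih =>
    rw [Finset.coe_insert, Set.pairwise_insert_of_notMem (by exact_mod_cast hi)] at hb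
    have hi_orth : Orth (b i) (s.sup b) :=
      Orth.symm <| Finset.sup_le fun j hj => (hb.2 j hj).2
    rw [Finset.sup_insert, P.add_right _ _ _ hi_orth, ih hb.1, Finset.sum_insert hi]

end SMap

theorem smap_chain_rule_general {L : Type*} [OML L] (P : SMap L) (n : ℕ) (b : Fin n → L)
    (horth : ∀ i j, i ≠ j → Orth (b i) (b j))
    (hne : ∀ i, P.p (b i) (b i) ≠ 0) (a : L) :
    P.p a (Finset.univ.sup b) / P.p (Finset.univ.sup b) (Finset.univ.sup b) =
      ∑ i : Fin n,
        (P.p (b i) (Finset.univ.sup b) / P.p (Finset.univ.sup b) (Finset.univ.sup b)) *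
          (P.p a (b i) / P.p (b i) (b i)) := by
  set S := Finset.univ.sup b
  have hterm (i : Fin n) :
      P.p (b i) S / P.p S S * (P.p a (b i) / P.p (b i) (b i)) = P.p a (b i) / P.p S S := by
    rw [P.p_of_le (Finset.le_sup (Finset.mem_univ i)), mul_comm, div_mul_div_cancel₀ (hne i)]
  rw [Finset.sum_congr rfl fun i _ => hterm i, ← Finset.sum_div,
    P.p_finset_sup_right a _ b fun i _ j _ => horth i j]

theorem smap_chain_rule {L : Type*} [OML L] (P : SMap L) (n : ℕ) (b : Fin n → L)
    (horth : ∀ i j, i ≠ j → Orth (b i) (b j))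
    (hne : ∀ i, P.p (b i) (b i) ≠ 0)
    (hS : P.p (Finset.univ.sup b) (Finset.univ.sup b) ≠ 0) (a : L) :
    P.p a (Finset.univ.sup b) / P.p (Finset.univ.sup b) (Finset.univ.sup b) =
      ∑ i : Fin n,
        (P.p (b i) (Finset.univ.sup b) / P.p (Finset.univ.sup b) (Finset.univ.sup b)) *
          (P.p a (b i) / P.p (b i) (b i)) :=
  smap_chain_rule_general P n b horth hne a
end

section
/- There exists a finite orthomodular lattice L and an s-map p on L together with elements a, b ∈ L such that p(a,b) = p(a,a)·p(b,b) but p(b,a) ≠ p(a,a)·p(b,b); that is, the independence relation induced by an s-map is not symmetric. Concretely, take L = {0, a, a⊥, b, b⊥, 1} (the horizontal sum MO2, where a,a⊥,b,b⊥ are pairwise incomparable except for the orthocomplement pairs) and p with p(a,a)=0.4, p(b,b)=0.3, p(a,b)=0.12, p(b,a)=0.08, p(a,b⊥)=0.28, p(b,a⊥)=0.22, p(a⊥,b)=0.18, p(b⊥,a)=0.32, p(a⊥,b⊥)=0.42, p(b⊥,a⊥)=0.38, p(a,a⊥)=p(a⊥,a)=p(b,b⊥)=p(b⊥,b)=0,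 extended additively. -/
/-!
On `MO2` the only orthogonal decompositions of `⊤` into atoms are `a ⊔ a'` and `b ⊔ b'`, so an
s-map is determined by its values on pairs of atoms. Conversely, a nonnegative table on pairs of
atoms that vanishes on orthogonal pairs, has total mass `1`, and whose row and column sums over
`{a, a'}` agree with those over `{b, b'}`, extends additively to an s-map. The table of the
statement is such a table, with `p(a,b) = 0.12 = 0.4 · 0.3 = p(a,a) p(b,b)` but `p(b,a) = 0.08`.
-/

inductive MO2.Atom
  | a | a' | b | b'
  deriving DecidableEq

instance : Fintype MO2.Atom :=
  ⟨{.a, .a', .b, .b'}, fun x => by cases x <;> decide⟩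

def MO2.Atom.compl : MO2.Atom → MO2.Atom
  | a => a'
  | a' => a
  | b => b'
  | b' => b

inductive MO2
  | bot
  | atom (x : MO2.Atom)
  | top
  deriving DecidableEq

namespace MO2

open Atom

instance : Fintype MO2 :=
  ⟨{bot, atom a, atom a', atom b, atom b', top}, fun x => by
    rcases x with _ | (_ | _ | _ | _) | _ <;> decide⟩

def leB : MO2 → MO2 → Bool
  | bot, _ => true
  | _, top => true
  | atom x, atom y => x = y
  | _, _ => false

instance : LE MO2 := ⟨fun x y => leB x y⟩

instance : DecidableRel (α := MO2) (· ≤ ·) := fun x y =>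
  inferInstanceAs (Decidable (leB x y = true))

def sup : MO2 → MO2 → MO2
  | bot, y => y
  | x, bot => x
  | atom x, atom y => if x = y then atom x else top
  | _, _ => top

def inf : MO2 → MO2 → MO2
  | top, y => y
  | x, top => x
  | atom x, atom y => if x = y then atom x else bot
  | _, _ => bot

def compl : MO2 → MO2
  | bot => top
  | atom x => atom x.compl
  | top => bot

instance : Lattice MO2 where
  sup := sup
  inf := inf
  le_refl := by decide
  le_trans := by decide
  le_antisymm := by decide
  le_sup_left := by decide
  le_sup_right := by decide
  sup_le := by decide
  inf_le_left := by decide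
  inf_le_right := by decide
  le_inf := by decide

instance : BoundedOrder MO2 where
  top := top
  bot := bot
  le_top := by decide
  bot_le := by decide

instance : Compl MO2 := ⟨compl⟩

instance : OML MO2 where
  compl_compl := by decide
  sup_compl := by decide
  compl_antitone := by decide
  orthomodular := by decide

theorem compl_atom (x : Atom) : (atom x)ᶜ = atom x.compl := rfl

theorem orth_iff {x y : MO2} :
    Orth x y ↔ x = ⊥ ∨ y = ⊥ ∨ ∃ z, x = atom z ∧ y = atom z.compl := by
  revert x y; unfold Orth; decide

theorem atom_sup_atom_compl (x : Atom) : atom x ⊔ atom x.compl = ⊤ := by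
  revert x; decide

structure AtomWeights where
  q : Atom → Atom → ℝ
  nonneg : ∀ x y, 0 ≤ q x y
  orth : ∀ x, q x x.compl = 0
  row_blocks : ∀ x, q x a + q x a' = q x b + q x b'
  col_blocks : ∀ y, q a y + q a' y = q b y + q b' y
  total : q a a + q a a' + q a' a + q a' a' = 1

namespace AtomWeights

variable (w : AtomWeights)

/-- Values at `⊤` are computed through the block `{a, a'}`; `row_blocks` and `col_blocks` say
that the block `{b, b'}` gives the same. -/
def extend : MO2 → MO2 → ℝ
  | atom x, atom y => w.q x y
  | atom x, top => w.q x a + w.q x a'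
  | top, atom y => w.q a y + w.q a' y
  | top, top => 1
  | _, _ => 0

@[simp] theorem extend_bot_left (c : MO2) : w.extend ⊥ c = 0 := by
  cases c <;> rfl

@[simp] theorem extend_bot_right (c : MO2) : w.extend c ⊥ = 0 := by
  cases c <;> rfl

theorem extend_top_left (x : Atom) (c : MO2) :
    w.extend ⊤ c = w.extend (atom x) c + w.extend (atom x.compl) c := by
  rcases c with _ | y | _
  · simp [extend]
  · cases x <;> simp only [extend, Atom.compl] <;> linarith [w.col_blocks y]
  · cases x <;> simp only [extend, Atom.compl] <;>
      linarith [w.total, w.col_blocks a, w.col_blocks a']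

theorem extend_top_right (x : Atom) (c : MO2) :
    w.extend c ⊤ = w.extend c (atom x) + w.extend c (atom x.compl) := by
  rcases c with _ | y | _
  · simp [extend]
  · cases x <;> simp only [extend, Atom.compl] <;> linarith [w.row_blocks y]
  · cases x <;> simp only [extend, Atom.compl] <;>
      linarith [w.total, w.row_blocks a, w.row_blocks a', w.col_blocks a, w.col_blocks a']

theorem extend_nonneg (x y : MO2) : 0 ≤ w.extend x y := by
  rcases x with _ | x | _ <;> rcases y with _ | y | _ <;> simp only [extend] <;>
    first
      | exact le_rfl
      | exact zero_le_one
      | exact w.nonneg _ _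
      | exact add_nonneg (w.nonneg _ _) (w.nonneg _ _)

theorem extend_le_extend_top_left (x c : MO2) : w.extend x c ≤ w.extend ⊤ c := by
  rcases x with _ | x | _
  · exact (w.extend_bot_left c).trans_le (w.extend_nonneg _ _)
  · linarith [w.extend_top_left x c, w.extend_nonneg (atom x.compl) c]
  · exact le_rfl

theorem extend_le_extend_top_right (c y : MO2) : w.extend c y ≤ w.extend c ⊤ := by
  rcases y with _ | y | _
  · exact (w.extend_bot_right c).trans_le (w.extend_nonneg _ _)
  · linarith [w.extend_top_right y c, w.extend_nonneg c (atom y.compl)]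
  · exact le_rfl

theorem extend_of_orth {x y : MO2} (h : Orth x y) : w.extend x y = 0 := by
  rcases orth_iff.1 h with rfl | rfl | ⟨z, rfl, rfl⟩
  · exact w.extend_bot_left y
  · exact w.extend_bot_right x
  · exact w.orth z

theorem extend_sup_left {x y : MO2} (h : Orth x y) (c : MO2) :
    w.extend (x ⊔ y) c = w.extend x c + w.extend y c := by
  rcases orth_iff.1 h with rfl | rfl | ⟨z, rfl, rfl⟩
  · simp
  · simp
  · rw [atom_sup_atom_compl, w.extend_top_left z]

theorem extend_sup_right {x y : MO2} (h : Orth x y) (c : MO2) :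
    w.extend c (x ⊔ y) = w.extend c x + w.extend c y := by
  rcases orth_iff.1 h with rfl | rfl | ⟨z, rfl, rfl⟩
  · simp
  · simp
  · rw [atom_sup_atom_compl, w.extend_top_right z]

def toSMap : SMap MO2 where
  p := w.extend
  nonneg := w.extend_nonneg
  le_one x y := calc
    w.extend x y ≤ w.extend ⊤ y := w.extend_le_extend_top_left x y
    _ ≤ w.extend ⊤ ⊤ := w.extend_le_extend_top_right ⊤ y
    _ = 1 := rfl
  top_top := rfl
  orth_zero _ _ := w.extend_of_orth
  add_left _ _ c h := w.extend_sup_left h c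
  add_right _ _ c h := w.extend_sup_right h c

@[simp] theorem toSMap_p_atom (x y : Atom) : w.toSMap.p (atom x) (atom y) = w.q x y := rfl

end AtomWeights

def nonsymmetricTable : Atom → Atom → ℝ
  | a, a => 0.4
  | a, a' => 0
  | a, b => 0.12
  | a, b' => 0.28
  | a', a => 0
  | a', a' => 0.6
  | a', b => 0.18
  | a', b' => 0.42
  | b, a => 0.08
  | b, a' => 0.22
  | b, b => 0.3
  | b, b' => 0
  | b', a => 0.32
  | b', a' => 0.38
  | b', b => 0
  | b', b' => 0.7

def nonsymmetricWeights : AtomWeights where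
  q := nonsymmetricTable
  nonneg x y := by cases x <;> cases y <;> norm_num [nonsymmetricTable]
  orth x := by cases x <;> rfl
  row_blocks x := by cases x <;> norm_num [nonsymmetricTable]
  col_blocks y := by cases y <;> norm_num [nonsymmetricTable]
  total := by norm_num [nonsymmetricTable]

end MO2

theorem smap_independence_not_symmetric :
    ∃ (L : Type) (inst : OML L) (_ : Fintype L) (P : SMap L) (a b : L),
      Fintype.card L = 6 ∧
      a ≠ ⊥ ∧ b ≠ ⊥ ∧ a ≠ ⊤ ∧ b ≠ ⊤ ∧ a ≠ b ∧ a ≠ bᶜ ∧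
      a ⊓ b = ⊥ ∧ a ⊓ bᶜ = ⊥ ∧ aᶜ ⊓ b = ⊥ ∧ aᶜ ⊓ bᶜ = ⊥ ∧
      a ⊔ b = ⊤ ∧ a ⊔ bᶜ = ⊤ ∧ aᶜ ⊔ b = ⊤ ∧ aᶜ ⊔ bᶜ = ⊤ ∧
      P.p a a = 0.4 ∧ P.p b b = 0.3 ∧ P.p a b = 0.12 ∧ P.p b a = 0.08 ∧
      P.p a bᶜ = 0.28 ∧ P.p b aᶜ = 0.22 ∧ P.p aᶜ b = 0.18 ∧ P.p bᶜ a = 0.32 ∧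
      P.p aᶜ bᶜ = 0.42 ∧ P.p bᶜ aᶜ = 0.38 ∧
      P.p a b = P.p a a * P.p b b ∧ P.p b a ≠ P.p a a * P.p b b := by
  refine ⟨MO2, inferInstance, inferInstance, MO2.nonsymmetricWeights.toSMap, .atom .a, .atom .b,
    ?_⟩
  and_intros
  all_goals first
    | decide
    | norm_num [MO2.compl_atom, MO2.Atom.compl, MO2.nonsymmetricWeights, MO2.nonsymmetricTable]
end
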